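/- There exists a constant C₁ > 0 with the following property: for every real k ≥ 1, every T ≤ −4, every C > 0, and every continuous function M : (−∞, T] → ℝ with |M(t)| ≤ C/t² for all t ≤ T, there exists a unique bounded, twice continuously differentiable function A : (−∞, T] → ℝ satisfying −A''(t) + k²·A(t) = M(t) for all t ≤ T and A(T) = 0; moreover this solution satisfies |A(t)| ≤ C₁·C/(k²·t²) for all t ≤ T. -/

import Mathlib

/-!
Uniqueness: the difference of two solutions solves `A'' = k² A` on `(-∞, T)`, so it is
`a e^{kt} + b e^{-kt}` there; boundedness at `-∞` forces `b = 0` and `A(T) = 0` forces `a = 0`.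

Existence: extend `M` continuously to `ℝ` by `M(T)`, convolve it with the whole-line Green's
function `e^{-k|t-s|}/(2k)` to get a bounded solution `P`, and subtract `P(T) e^{k(t-T)}`.
On the left half of the convolution `|M(s)| ≤ C/t²` directly. On the right half `1/s²` grows
as `s` increases towards `T`, but the weight `e^{-k(s-t)}` wins by `t² ≤ 4 m² e^{(m-t)/2}` for
`t ≤ m ≤ -4`; the same inequality controls the correction term `P(T) e^{k(t-T)}`.
-/

/-- `A` is a bounded, twice continuously differentiable solution on `(−∞, T]` of
`−A'' + k² A = M` with `A(T) = 0`. -/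
def IsModeSolution (k T : ℝ) (M A : ℝ → ℝ) : Prop :=
  (∃ K : ℝ, ∀ t ≤ T, |A t| ≤ K) ∧ ContDiffOn ℝ 2 A (Set.Iic T) ∧
    (∀ t ≤ T, -deriv (deriv A) t + k ^ 2 * A t = M t) ∧ A T = 0

open MeasureTheory Set Filter Real Topology

theorem exists_eq_exp_add_exp_of_hasDerivAt {k T : ℝ} (hk : k ≠ 0) {D E : ℝ → ℝ}
    (hD : ∀ t < T, HasDerivAt D (E t) t) (hE : ∀ t < T, HasDerivAt E (k ^ 2 * D t) t) :
    ∃ a b : ℝ, ∀ t < T, D t = a * exp (k * t) + b * exp (-k * t) := by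
  have conserved (c : ℝ) (hc : c ^ 2 = k ^ 2) :
      ∃ α, ∀ t < T, exp (c * t) * (E t - c * D t) = α := by
    have hderiv : ∀ t < T, HasDerivAt (fun t => exp (c * t) * (E t - c * D t)) 0 t := by
      intro t ht
      refine (((hasDerivAt_id t).const_mul c).exp.mul
        ((hE t ht).sub ((hD t ht).const_mul c))).congr_deriv ?_
      simp only [id, Pi.sub_apply]
      linear_combination -(exp (c * t) * D t) * hc
    exact isOpen_Iio.exists_is_const_of_deriv_eq_zero isPreconnected_Iio
      (fun t ht => (hderiv t ht).differentiableAt.differentiableWithinAt)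
      (fun t ht => (hderiv t ht).deriv)
  obtain ⟨α, hα⟩ := conserved (-k) (by ring)
  obtain ⟨β, hβ⟩ := conserved k rfl
  refine ⟨α / (2 * k), -β / (2 * k), fun t ht => ?_⟩
  have hexp : exp (k * t) * exp (-k * t) = 1 := by rw [← exp_add]; simp
  have h2k : 2 * k * D t = α * exp (k * t) - β * exp (-k * t) := by
    linear_combination exp (k * t) * hα t ht - exp (-k * t) * hβ t ht - 2 * k * D t * hexp
  rw [div_mul_eq_mul_div, div_mul_eq_mul_div, ← add_div, eq_div_iff (by simpa using hk)]
  linear_combination h2k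

theorem eqOn_zero_of_eq_exp_add_exp {k T a b : ℝ} (hk : 0 < k) {D : ℝ → ℝ}
    (hD : ∀ t < T, D t = a * exp (k * t) + b * exp (-k * t)) (hbdd : ∃ K, ∀ t ≤ T, |D t| ≤ K)
    (hcont : ContinuousWithinAt D (Iic T) T) (hDT : D T = 0) : EqOn D 0 (Iic T) := by
  obtain ⟨K, hK⟩ := hbdd
  have hb : b = 0 := by
    have hsmall : Tendsto (fun t => exp (k * t) * (K + |a|)) atBot (𝓝 0) := by
      simpa using ((tendsto_exp_atBot.comp (tendsto_id.const_mul_atBot hk)).mul_const (K + |a|))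
    refine abs_nonpos_iff.mp (ge_of_tendsto hsmall ?_)
    filter_upwards [eventually_lt_atBot (min T 0)] with t ht
    have htT : t < T := ht.trans_le (min_le_left _ _)
    have hexp_le : exp (k * t) ≤ 1 := exp_le_one_iff.mpr (by nlinarith [min_le_right T 0])
    have hb_eq : b = exp (k * t) * (D t - a * exp (k * t)) := by
      rw [hD t htT, ← sub_eq_zero]
      have : exp (k * t) * exp (-k * t) = 1 := by rw [← exp_add]; simp
      linear_combination (-b) * this
    rw [hb_eq, abs_mul, abs_of_pos (exp_pos _)]
    gcongr
    calc |D t - a * exp (k * t)| ≤ |D t| + |a| * exp (k * t) := by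
          simpa [abs_mul] using abs_sub (D t) (a * exp (k * t))
      _ ≤ K + |a| := by gcongr; exacts [hK t htT.le, mul_le_of_le_one_right (abs_nonneg a) hexp_le]
  have ha : a = 0 := by
    have hlim : Tendsto D (𝓝[<] T) (𝓝 (a * exp (k * T))) := by
      refine ((continuous_const.mul (continuous_exp.comp (continuous_const.mul
        continuous_id))).tendsto T).mono_left nhdsWithin_le_nhds |>.congr' ?_
      filter_upwards [self_mem_nhdsWithin] with t ht
      simp [hD t ht, hb]
    have h0 : Tendsto D (𝓝[<] T) (𝓝 0) := by
      have := hcont.mono Iio_subset_Iic_self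
      rwa [ContinuousWithinAt, hDT] at this
    simpa [(exp_pos _).ne'] using tendsto_nhds_unique hlim h0
  intro t ht
  rcases (mem_Iic.mp ht).lt_or_eq with ht | rfl
  · simp [hD t ht, ha, hb]
  · exact hDT

theorem IsModeSolution.hasDerivAt {k T : ℝ} {M A : ℝ → ℝ} (h : IsModeSolution k T M A) {t : ℝ}
    (ht : t < T) :
    HasDerivAt A (deriv A t) t ∧ HasDerivAt (deriv A) (k ^ 2 * A t - M t) t := by
  obtain ⟨-, hA, heq, -⟩ := h
  have hA' := hA.mono Iio_subset_Iic_self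
  rw [show (2 : WithTop ℕ∞) = 1 + 1 from rfl,
    contDiffOn_succ_iff_deriv_of_isOpen isOpen_Iio] at hA'
  have hnhds : Iio T ∈ 𝓝 t := Iio_mem_nhds ht
  refine ⟨(hA'.1.differentiableAt hnhds).hasDerivAt, ?_⟩
  refine ((hA'.2.2.differentiableOn one_ne_zero).differentiableAt hnhds).hasDerivAt.congr_deriv ?_
  linarith [heq t ht.le]

theorem IsModeSolution.eqOn {k T : ℝ} (hk : 0 < k) {M A₁ A₂ : ℝ → ℝ}
    (h₁ : IsModeSolution k T M A₁) (h₂ : IsModeSolution k T M A₂) : EqOn A₁ A₂ (Iic T) := by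
  obtain ⟨a, b, hab⟩ := exists_eq_exp_add_exp_of_hasDerivAt hk.ne' (D := A₁ - A₂)
    (E := deriv A₁ - deriv A₂) (fun t ht => ((h₁.hasDerivAt ht).1.sub (h₂.hasDerivAt ht).1))
    (fun t ht => by
      refine ((h₁.hasDerivAt ht).2.sub (h₂.hasDerivAt ht).2).congr_deriv ?_
      simp only [Pi.sub_apply]; ring)
  have hbdd : ∃ K, ∀ t ≤ T, |(A₁ - A₂) t| ≤ K := by
    obtain ⟨⟨K₁, hK₁⟩, -⟩ := h₁
    obtain ⟨⟨K₂, hK₂⟩, -⟩ := h₂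
    exact ⟨K₁ + K₂, fun t ht => (abs_sub _ _).trans (add_le_add (hK₁ t ht) (hK₂ t ht))⟩
  have hcont : ContinuousWithinAt (A₁ - A₂) (Iic T) T :=
    (h₁.2.1.continuousOn.sub h₂.2.1.continuousOn) T self_mem_Iic
  have hzero := eqOn_zero_of_eq_exp_add_exp hk hab hbdd hcont (by simp [h₁.2.2.2, h₂.2.2.2])
  exact fun t ht => sub_eq_zero.mp (hzero ht)

theorem hasDerivAt_integral_Iic {f : ℝ → ℝ} (hf : Continuous f)
    (hint : ∀ r, IntegrableOn f (Iic r)) (t : ℝ) :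
    HasDerivAt (fun r => ∫ s in Iic r, f s) (f t) t := by
  have hsplit : (fun r => ∫ s in Iic r, f s) = fun r => (∫ s in Iic 0, f s) + ∫ s in 0..r, f s := by
    ext r
    rw [← intervalIntegral.integral_Iic_sub_Iic (hint 0) (hint r)]
    ring
  rw [hsplit]
  exact (intervalIntegral.integral_hasDerivAt_right (hf.intervalIntegrable _ _)
    hf.aestronglyMeasurable.stronglyMeasurableAtFilter hf.continuousAt).const_add _

theorem hasDerivAt_integral_Ioi {f : ℝ → ℝ} (hf : Continuous f)
    (hint : ∀ r, IntegrableOn f (Ioi r)) (t : ℝ) :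
    HasDerivAt (fun r => ∫ s in Ioi r, f s) (-f t) t := by
  have hsplit : (fun r => ∫ s in Ioi r, f s) = fun r => (∫ s in Ioi 0, f s) - ∫ s in 0..r, f s := by
    ext r
    rw [← intervalIntegral.integral_Ioi_sub_Ioi' (hint 0) (hint r)]
    ring
  rw [hsplit]
  exact (intervalIntegral.integral_hasDerivAt_right (hf.intervalIntegrable _ _)
    hf.aestronglyMeasurable.stronglyMeasurableAtFilter hf.continuousAt).const_sub _

def IsLineSolution (k : ℝ) (g f : ℝ → ℝ) : Prop :=
  ∃ f' : ℝ → ℝ, ∀ t, HasDerivAt f (f' t) t ∧ HasDerivAt f' (k ^ 2 * f t - g t) t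

namespace IsLineSolution

variable {k : ℝ} {g f : ℝ → ℝ}

theorem deriv_deriv (h : IsLineSolution k g f) (t : ℝ) :
    deriv (deriv f) t = k ^ 2 * f t - g t := by
  obtain ⟨f', hf⟩ := h
  rw [show deriv f = f' from funext fun t => (hf t).1.deriv, (hf t).2.deriv]

theorem contDiff (h : IsLineSolution k g f) (hg : Continuous g) : ContDiff ℝ 2 f := by
  obtain ⟨f', hf⟩ := h
  have hderiv : deriv f = f' := funext fun t => (hf t).1.deriv
  have hf_diff : Differentiable ℝ f := fun t => (hf t).1.differentiableAt
  rw [show (2 : WithTop ℕ∞) = 1 + 1 from rfl, contDiff_succ_iff_deriv, hderiv,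
    contDiff_one_iff_deriv, show deriv f' = fun t => k ^ 2 * f t - g t from
      funext fun t => (hf t).2.deriv]
  exact ⟨hf_diff, by simp, fun t => (hf t).2.differentiableAt,
    (continuous_const.mul hf_diff.continuous).sub hg⟩

theorem add_mul_exp (h : IsLineSolution k g f) (c a : ℝ) :
    IsLineSolution k g (fun t => f t + c * exp (k * (t - a))) := by
  obtain ⟨f', hf⟩ := h
  have hexp (t : ℝ) : HasDerivAt (fun t => exp (k * (t - a))) (exp (k * (t - a)) * k) t := by
    simpa using (((hasDerivAt_id t).sub_const a).const_mul k).exp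
  refine ⟨fun t => f' t + c * (exp (k * (t - a)) * k), fun t => ⟨?_, ?_⟩⟩
  · exact (hf t).1.add ((hexp t).const_mul c)
  · refine ((hf t).2.add (((hexp t).mul_const k).const_mul c)).congr_deriv ?_
    ring

end IsLineSolution

/-- The convolution of `g` with `exp (-k |t - s|) / (2 k)`, the Green's function of
`-d²/dt² + k²` on `ℝ`. -/
noncomputable def boundedSolution (k : ℝ) (g : ℝ → ℝ) (t : ℝ) : ℝ :=
  (exp (-k * t) * (∫ s in Iic t, exp (k * s) * g s) +
    exp (k * t) * ∫ s in Ioi t, exp (-k * s) * g s) / (2 * k)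

theorem isLineSolution_boundedSolution {k B : ℝ} (hk : 0 < k) {g : ℝ → ℝ} (hg : Continuous g)
    (hB : ∀ s, |g s| ≤ B) : IsLineSolution k g (boundedSolution k g) := by
  set L : ℝ → ℝ := fun r => ∫ s in Iic r, exp (k * s) * g s
  set R : ℝ → ℝ := fun r => ∫ s in Ioi r, exp (-k * s) * g s
  have hP : boundedSolution k g = fun t => (exp (-k * t) * L t + exp (k * t) * R t) / (2 * k) :=
    rfl
  have hL (t : ℝ) : HasDerivAt L (exp (k * t) * g t) t :=
    hasDerivAt_integral_Iic (by fun_prop) (fun r =>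
      Integrable.mul_bdd (integrableOn_exp_mul_Iic hk r) hg.aestronglyMeasurable (ae_of_all _ hB)) t
  have hR (t : ℝ) : HasDerivAt R (-(exp (-k * t) * g t)) t :=
    hasDerivAt_integral_Ioi (by fun_prop) (fun r =>
      Integrable.mul_bdd (integrableOn_exp_mul_Ioi (neg_neg_of_pos hk) r)
        hg.aestronglyMeasurable (ae_of_all _ hB)) t
  have hexp (c t : ℝ) : HasDerivAt (fun t => exp (c * t)) (exp (c * t) * c) t := by
    simpa using ((hasDerivAt_id t).const_mul c).exp
  have hinv (t : ℝ) : exp (k * t) * exp (-(k * t)) = 1 := by rw [← exp_add]; simp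
  refine ⟨fun t => (exp (k * t) * R t - exp (-k * t) * L t) / 2, fun t => ⟨?_, ?_⟩⟩
  · rw [hP]
    refine ((((hexp (-k) t).mul (hL t)).add ((hexp k t).mul (hR t))).div_const
      (2 * k)).congr_deriv ?_
    field_simp
    ring
  · refine ((((hexp k t).mul (hR t)).sub ((hexp (-k) t).mul (hL t))).div_const 2).congr_deriv ?_
    rw [hP]
    field_simp
    linear_combination (-2 * g t) * hinv t

theorem abs_integral_Iic_exp_mul_le {k B t : ℝ} (hk : 0 < k) {g : ℝ → ℝ}
    (hg : ∀ s ≤ t, |g s| ≤ B) : |∫ s in Iic t, exp (k * s) * g s| ≤ B * exp (k * t) / k := by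
  have hpt : ∀ s ∈ Iic t, ‖exp (k * s) * g s‖ ≤ B * exp (k * s) := fun s hs => by
    rw [norm_mul, norm_of_nonneg (exp_pos _).le, mul_comm B]
    exact mul_le_mul_of_nonneg_left (hg s hs) (exp_pos _).le
  have h := norm_integral_le_of_norm_le ((integrableOn_exp_mul_Iic hk t).const_mul B)
    (ae_restrict_of_forall_mem measurableSet_Iic hpt)
  rwa [integral_const_mul, integral_exp_mul_Iic hk, ← mul_div_assoc] at h

theorem abs_integral_Ioi_exp_mul_le {k B t : ℝ} (hk : 0 < k) {g : ℝ → ℝ}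
    (hg : ∀ s > t, |g s| ≤ B * exp (k * (s - t) / 2)) :
    |∫ s in Ioi t, exp (-k * s) * g s| ≤ 2 * B * exp (-k * t) / k := by
  have hk2 : -k / 2 < 0 := by linarith
  have hpt : ∀ s ∈ Ioi t, ‖exp (-k * s) * g s‖ ≤ B * exp (-k * t / 2) * exp (-k / 2 * s) :=
    fun s hs => by
      rw [norm_mul, norm_of_nonneg (exp_pos _).le, mul_assoc, ← exp_add]
      calc exp (-k * s) * |g s| ≤ exp (-k * s) * (B * exp (k * (s - t) / 2)) :=
            mul_le_mul_of_nonneg_left (hg s hs) (exp_pos _).le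
        _ = B * exp (-k * t / 2 + -k / 2 * s) := by
          rw [mul_left_comm, ← exp_add]; ring_nf
  have h := norm_integral_le_of_norm_le
    ((integrableOn_exp_mul_Ioi hk2 t).const_mul (B * exp (-k * t / 2)))
    (ae_restrict_of_forall_mem measurableSet_Ioi hpt)
  rw [integral_const_mul, integral_exp_mul_Ioi hk2] at h
  calc _ ≤ _ := h
    _ = 2 * B * exp (-k * t) / k := by
      have he : exp (-k * t / 2) * exp (-k / 2 * t) = exp (-k * t) := by
        rw [← exp_add]; ring_nf
      rw [← he]
      field_simp

theorem abs_boundedSolution_le {k B t : ℝ} (hk : 0 < k) {g : ℝ → ℝ}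
    (hleft : ∀ s ≤ t, |g s| ≤ B) (hright : ∀ s > t, |g s| ≤ B * exp (k * (s - t) / 2)) :
    |boundedSolution k g t| ≤ 3 * B / (2 * k ^ 2) := by
  have hinv : exp (k * t) * exp (-(k * t)) = 1 := by rw [← exp_add]; simp
  rw [boundedSolution, abs_div, abs_of_pos (by positivity : 0 < 2 * k)]
  calc _ ≤ (exp (-k * t) * (B * exp (k * t) / k) + exp (k * t) * (2 * B * exp (-k * t) / k))
        / (2 * k) := by
        gcongr
        refine (abs_add_le _ _).trans (add_le_add ?_ ?_) <;>
          rw [abs_mul, abs_of_pos (exp_pos _)] <;> gcongr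
        exacts [abs_integral_Iic_exp_mul_le hk hleft, abs_integral_Ioi_exp_mul_le hk hright]
    _ = 3 * B / (2 * k ^ 2) := by
      field_simp
      linear_combination (3 * B) * hinv

theorem sq_le_four_mul_sq_mul_exp {m t : ℝ} (htm : t ≤ m) (hm : m ≤ -4) :
    t ^ 2 ≤ 4 * m ^ 2 * exp ((m - t) / 2) := by
  set h := m - t
  have hh : 0 ≤ h := sub_nonneg.mpr htm
  have hquarter : h / 4 ≤ exp (h / 4) := by linarith [add_one_le_exp (h / 4)]
  have hsq : (h / 4) ^ 2 ≤ exp (h / 2) := by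
    rw [show h / 2 = h / 4 + h / 4 by ring, exp_add, ← sq]
    exact pow_le_pow_left₀ (by positivity) hquarter 2
  have hone : 1 ≤ exp (h / 2) := one_le_exp (by positivity)
  have ht : t = m - h := by ring
  rw [ht]
  nlinarith [sq_nonneg (m + h), mul_le_mul_of_nonneg_right (by nlinarith : (16 : ℝ) ≤ m ^ 2)
    (exp_pos (h / 2)).le, mul_le_mul_of_nonneg_left hone (sq_nonneg m)]

theorem abs_boundedSolution_le_div_sq {k T C t : ℝ} (hk : 1 ≤ k) (hT : T ≤ -4) (hC : 0 ≤ C)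
    {g : ℝ → ℝ} (hg : ∀ s, |g s| ≤ C / min s T ^ 2) (ht : t ≤ T) :
    |boundedSolution k g t| ≤ 6 * C / k ^ 2 / t ^ 2 := by
  have ht2 : 0 < t ^ 2 := by nlinarith
  have hleft : ∀ s ≤ t, |g s| ≤ 4 * C / t ^ 2 := fun s hs => by
    refine (hg s).trans ?_
    rw [min_eq_left (hs.trans ht), div_le_div_iff₀ (by nlinarith) ht2]
    nlinarith [mul_le_mul_of_nonneg_left (by nlinarith : t ^ 2 ≤ s ^ 2) hC]
  have hright : ∀ s > t, |g s| ≤ 4 * C / t ^ 2 * exp (k * (s - t) / 2) := fun s hs => by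
    have hsq : t ^ 2 ≤ 4 * min s T ^ 2 * exp (k * (s - t) / 2) :=
      (sq_le_four_mul_sq_mul_exp (le_min hs.le ht) ((min_le_right s T).trans hT)).trans
        (by gcongr; nlinarith [min_le_left s T])
    refine (hg s).trans ?_
    rw [div_mul_eq_mul_div, div_le_div_iff₀ (by nlinarith [min_le_right s T]) ht2]
    nlinarith [mul_le_mul_of_nonneg_left hsq hC]
  calc _ ≤ 3 * (4 * C / t ^ 2) / (2 * k ^ 2) := abs_boundedSolution_le (by linarith) hleft hright
    _ = 6 * C / k ^ 2 / t ^ 2 := by field_simp; ring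

theorem abs_add_mul_exp_le_div_sq {k T B t : ℝ} (hk : 1 ≤ k) (hT : T ≤ -4) (hB : 0 ≤ B)
    {P : ℝ → ℝ} (hP : ∀ t ≤ T, |P t| ≤ B / t ^ 2) (ht : t ≤ T) :
    |P t + -P T * exp (k * (t - T))| ≤ 5 * B / t ^ 2 := by
  have ht2 : 0 < t ^ 2 := by nlinarith
  have hT2 : 0 < T ^ 2 := by nlinarith
  have hdecay : t ^ 2 * exp (k * (t - T)) ≤ 4 * T ^ 2 := by
    have h : exp ((T - t) / 2) * exp (k * (t - T)) ≤ 1 := by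
      rw [← exp_add, exp_le_one_iff]; nlinarith
    nlinarith [mul_le_mul_of_nonneg_right (sq_le_four_mul_sq_mul_exp ht hT)
      (exp_pos (k * (t - T))).le]
  calc _ ≤ |P t| + |P T| * exp (k * (t - T)) := by
        simpa [abs_mul, abs_of_pos (exp_pos _)] using abs_add_le (P t) (-P T * exp (k * (t - T)))
    _ ≤ B / t ^ 2 + B / T ^ 2 * exp (k * (t - T)) := by gcongr <;> exact hP _ (by linarith)
    _ ≤ 5 * B / t ^ 2 := by
        rw [div_mul_eq_mul_div, div_add_div _ _ ht2.ne' hT2.ne',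
          div_le_div_iff₀ (mul_pos ht2 hT2) ht2]
        nlinarith [mul_le_mul_of_nonneg_left hdecay (by positivity : 0 ≤ B * t ^ 2)]

theorem exists_isModeSolution {k T C : ℝ} (hk : 1 ≤ k) (hT : T ≤ -4) (hC : 0 ≤ C)
    {M : ℝ → ℝ} (hMc : ContinuousOn M (Iic T)) (hMb : ∀ t ≤ T, |M t| ≤ C / t ^ 2) :
    ∃ A, IsModeSolution k T M A ∧ ∀ t ≤ T, |A t| ≤ 30 * C / (k ^ 2 * t ^ 2) := by
  -- Extending `M` constantly past `T` makes the solution `C²` on all of `ℝ`, so that the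
  -- two-sided `deriv (deriv A) T` is the one the equation talks about.
  set g : ℝ → ℝ := fun s => M (min s T)
  have hg : Continuous g :=
    hMc.comp_continuous (continuous_id.min continuous_const) fun s => min_le_right s T
  have hg_le (s : ℝ) : |g s| ≤ C / min s T ^ 2 := hMb _ (min_le_right s T)
  have hg_bdd (s : ℝ) : |g s| ≤ C / 16 :=
    (hg_le s).trans (div_le_div_of_nonneg_left hC (by norm_num)
      (by nlinarith [min_le_right s T]))
  set P := boundedSolution k g
  set A : ℝ → ℝ := fun t => P t + -P T * exp (k * (t - T))
  have hA : IsLineSolution k g A :=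
    (isLineSolution_boundedSolution (by linarith) hg hg_bdd).add_mul_exp _ _
  have hA_le (t : ℝ) (ht : t ≤ T) : |A t| ≤ 30 * C / (k ^ 2 * t ^ 2) := by
    calc |A t| ≤ 5 * (6 * C / k ^ 2) / t ^ 2 := abs_add_mul_exp_le_div_sq hk hT (by positivity)
          (fun s hs => abs_boundedSolution_le_div_sq hk hT hC hg_le hs) ht
      _ = 30 * C / (k ^ 2 * t ^ 2) := by field_simp; ring
  refine ⟨A, ⟨⟨30 * C / (k ^ 2 * 16), fun t ht => ?_⟩, (hA.contDiff hg).contDiffOn,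
    fun t ht => ?_, by simp [A]⟩, hA_le⟩
  · exact (hA_le t ht).trans (div_le_div_of_nonneg_left (by positivity) (by positivity)
      (by gcongr; nlinarith))
  · simp [hA.deriv_deriv, g, min_eq_left ht]

/-- There is a constant `C₁ > 0` such that for every `k ≥ 1`, `T ≤ −4`, `C > 0` and
continuous `M` on `(−∞, T]` with `|M(t)| ≤ C/t²`, the problem `−A'' + k²A = M` on `(−∞, T]`,
`A(T) = 0`, has a unique bounded C² solution, and it satisfies `|A(t)| ≤ C₁ C/(k² t²)`. -/
theorem stmt7 :
    ∃ C₁ : ℝ, 0 < C₁ ∧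
      ∀ (k T C : ℝ), 1 ≤ k → T ≤ -4 → 0 < C →
        ∀ M : ℝ → ℝ, ContinuousOn M (Set.Iic T) →
          (∀ t ≤ T, |M t| ≤ C / t ^ 2) →
          (∃ A : ℝ → ℝ, IsModeSolution k T M A ∧
              ∀ t ≤ T, |A t| ≤ C₁ * C / (k ^ 2 * t ^ 2)) ∧
          (∀ A₁ A₂ : ℝ → ℝ, IsModeSolution k T M A₁ → IsModeSolution k T M A₂ →
            Set.EqOn A₁ A₂ (Set.Iic T)) := by
  refine ⟨30, by norm_num, fun k T C hk hT hC M hMc hMb => ⟨?_, ?_⟩⟩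
  · exact exists_isModeSolution hk hT hC.le hMc hMb
  · exact fun A₁ A₂ h₁ h₂ => h₁.eqOn (by linarith) h₂
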